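/- Let $Y^q_t = y e^{-\beta t} + \int_0^t e^{-\beta(t-s)}\lambda q_s\,ds$ and $Y^u_t = y e^{-\beta t} + \int_0^t e^{-\beta(t-s)}\lambda u_s\,ds$ for square-integrable processes $q,u$ and constants $\beta,\lambda>0$, $y\in\mathbb R$. Then for every $T>0$, $\int_0^T (Y^q_t - Y^u_t)(q_t - u_t)\,dt = \frac{1}{2\lambda}(Y^q_T - Y^u_T)^2 + \frac{\beta}{\lambda}\int_0^T (Y^q_t - Y^u_t)^2\,dt$. In particular, if $q\neq u$ on a set of positive Lebesgue measure, this quantity is strictly positive. -/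

import Mathlib

/-!
Impact is linear in the trading rate, so `D = Y^q - Y^u` is the impact of the rate `w = q - u`
started from `0`. It is absolutely continuous with `D' = λ w - β D` a.e., hence
`λ ∫ D w = ∫ D (D' + β D) = D(T)² / 2 + β ∫ D²`. If `∫ D² = 0`, continuity forces `D ≡ 0`
on `[0, T]`, and then `λ w = D' + β D = 0` a.e.
-/

open MeasureTheory

/-- The Obizhaeva–Wang transient price impact driven by a trading rate `q`:
`Y^q_t = y e^{-β t} + ∫₀ᵗ e^{-β (t-s)} λ q_s ds`. -/
noncomputable def owImpact (β lam y : ℝ) (q : ℝ → ℝ) (t : ℝ) : ℝ :=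
  y * Real.exp (-β * t) + ∫ s in (0:ℝ)..t, Real.exp (-β * (t - s)) * (lam * q s)

open Set Filter Topology

theorem AbsolutelyContinuousOnInterval.integral_mul_deriv_self {f : ℝ → ℝ} {a b : ℝ}
    (hf : AbsolutelyContinuousOnInterval f a b) :
    ∫ x in a..b, f x * deriv f x = (f b ^ 2 - f a ^ 2) / 2 := by
  have h := hf.integral_deriv_mul_eq_sub hf
  simp_rw [mul_comm (deriv f _) (f _), ← two_mul] at h
  rw [intervalIntegral.integral_const_mul] at h
  linarith

theorem eqOn_zero_of_integral_sq_eq_zero {f : ℝ → ℝ} {a b : ℝ} (hab : a < b)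
    (hf : ContinuousOn f (Icc a b)) (h : ∫ x in a..b, f x ^ 2 = 0) : EqOn f 0 (Icc a b) := by
  have hf2 : IntervalIntegrable (fun x => f x ^ 2) volume a b :=
    (hf.pow 2).intervalIntegrable_of_Icc hab.le
  have hsq : (fun x => f x ^ 2) =ᵐ[volume.restrict (Ioc a b)] 0 :=
    (intervalIntegral.integral_eq_zero_iff_of_le_of_nonneg_ae hab.le
      (Eventually.of_forall fun x => sq_nonneg (f x)) hf2).mp h
  refine Measure.eqOn_Icc_of_ae_eq volume hab.ne ?_ hf continuousOn_const
  rw [← Measure.restrict_congr_set Ioc_ae_eq_Icc]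
  filter_upwards [hsq] with x hx
  simpa using hx

theorem MeasureTheory.MemLp.intervalIntegrable_of_Icc {f : ℝ → ℝ} {a b : ℝ} {p : ENNReal}
    (hp : 1 ≤ p) (hab : a ≤ b) (hf : MemLp f p (volume.restrict (Icc a b))) :
    IntervalIntegrable f volume a b :=
  IntegrableOn.intervalIntegrable (by rw [uIcc_of_le hab]; exact hf.integrable hp)

section

variable {β lam y T : ℝ} {w : ℝ → ℝ}

theorem owImpact_eq_exp_mul (t : ℝ) :
    owImpact β lam y w t
      = Real.exp (-β * t) * (y + ∫ s in (0:ℝ)..t, Real.exp (β * s) * (lam * w s)) := by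
  have hsplit : ∀ s, Real.exp (-β * (t - s)) = Real.exp (-β * t) * Real.exp (β * s) := by
    intro s; rw [← Real.exp_add]; ring_nf
  simp_rw [owImpact, hsplit, mul_assoc, intervalIntegral.integral_const_mul]
  ring

theorem intervalIntegrable_exp_mul_const_mul (hw : IntervalIntegrable w volume 0 T) (c d : ℝ) :
    IntervalIntegrable (fun s => Real.exp (c * s) * (d * w s)) volume 0 T :=
  (hw.const_mul d).continuousOn_mul (by fun_prop)

theorem owImpact_sub_owImpact {q u : ℝ → ℝ} {t : ℝ} (hq : IntervalIntegrable q volume 0 t)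
    (hu : IntervalIntegrable u volume 0 t) :
    owImpact β lam y q t - owImpact β lam y u t = owImpact β lam 0 (q - u) t := by
  have hint : ∀ v : ℝ → ℝ, IntervalIntegrable v volume 0 t →
      IntervalIntegrable (fun s => Real.exp (-β * (t - s)) * (lam * v s)) volume 0 t :=
    fun v hv => (hv.const_mul lam).continuousOn_mul (by fun_prop)
  rw [owImpact, owImpact, owImpact, add_sub_add_left_eq_sub,
    ← intervalIntegral.integral_sub (hint q hq) (hint u hu)]
  simp [mul_sub]

theorem owImpact_at_zero : owImpact β lam y w 0 = y := by
  simp [owImpact]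

theorem ae_hasDerivAt_owImpact (hw : IntervalIntegrable w volume 0 T) :
    ∀ᵐ t, t ∈ uIcc 0 T →
      HasDerivAt (owImpact β lam y w) (lam * w t - β * owImpact β lam y w t) t := by
  filter_upwards [(intervalIntegrable_exp_mul_const_mul hw β lam).ae_hasDerivAt_integral]
    with t hF ht
  have hexp : HasDerivAt (fun t => Real.exp (-β * t)) (Real.exp (-β * t) * -β) t := by
    simpa using ((hasDerivAt_id t).const_mul (-β)).exp
  have hprod := hexp.fun_mul ((hF ht 0 left_mem_uIcc).const_add y)
  rw [show owImpact β lam y w = _ from funext owImpact_eq_exp_mul]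
  have hinv : Real.exp (-β * t) * Real.exp (β * t) = 1 := by
    rw [← Real.exp_add]; simp
  refine hprod.congr_deriv ?_
  linear_combination (lam * w t) * hinv

theorem absolutelyContinuousOnInterval_owImpact (hw : IntervalIntegrable w volume 0 T) :
    AbsolutelyContinuousOnInterval (owImpact β lam y w) 0 T := by
  rw [show owImpact β lam y w = _ from funext owImpact_eq_exp_mul]
  have hexp : AbsolutelyContinuousOnInterval (fun t => Real.exp (-β * t)) 0 T :=
    ContDiffOn.absolutelyContinuousOnInterval (by fun_prop)
  have hconst : AbsolutelyContinuousOnInterval (fun _ => y) 0 T :=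
    contDiffOn_const.absolutelyContinuousOnInterval
  exact hexp.fun_mul (hconst.add ((intervalIntegrable_exp_mul_const_mul hw β lam
    ).absolutelyContinuousOnInterval_intervalIntegral left_mem_uIcc))

theorem integral_owImpact_mul (hw : IntervalIntegrable w volume 0 T) :
    lam * ∫ t in (0:ℝ)..T, owImpact β lam y w t * w t
      = (owImpact β lam y w T ^ 2 - y ^ 2) / 2 + β * ∫ t in (0:ℝ)..T, owImpact β lam y w t ^ 2 := by
  set Y := owImpact β lam y w
  have hY : AbsolutelyContinuousOnInterval Y 0 T := absolutelyContinuousOnInterval_owImpact hw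
  have hode : ∀ᵐ t, t ∈ uIoc (0:ℝ) T → Y t * (lam * w t) = Y t * deriv Y t + β * Y t ^ 2 := by
    filter_upwards [ae_hasDerivAt_owImpact (β := β) (lam := lam) (y := y) hw] with t ht hmem
    rw [(ht (uIoc_subset_uIcc hmem)).deriv]
    ring
  have hYY' : IntervalIntegrable (fun t => Y t * deriv Y t) volume 0 T :=
    hY.intervalIntegrable_deriv.continuousOn_mul hY.continuousOn
  have hY2 : IntervalIntegrable (fun t => β * Y t ^ 2) volume 0 T :=
    ((hY.continuousOn.pow 2).intervalIntegrable).const_mul β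
  calc lam * ∫ t in (0:ℝ)..T, Y t * w t
      = ∫ t in (0:ℝ)..T, Y t * (lam * w t) := by
        rw [← intervalIntegral.integral_const_mul]; congr 1; ext t; ring
    _ = ∫ t in (0:ℝ)..T, (Y t * deriv Y t + β * Y t ^ 2) := intervalIntegral.integral_congr_ae hode
    _ = (Y T ^ 2 - y ^ 2) / 2 + β * ∫ t in (0:ℝ)..T, Y t ^ 2 := by
        rw [intervalIntegral.integral_add hYY' hY2, hY.integral_mul_deriv_self,
          intervalIntegral.integral_const_mul, show Y 0 = y from owImpact_at_zero]

theorem volume_setOf_ne_zero_of_owImpact_eqOn_zero (hlam : lam ≠ 0)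
    (hw : IntervalIntegrable w volume 0 T) (hY : EqOn (owImpact β lam y w) 0 (Icc 0 T)) :
    volume {t ∈ Icc 0 T | w t ≠ 0} = 0 := by
  suffices h : ∀ᵐ t, t ∈ Icc 0 T → w t = 0 by
    simpa [ae_iff, and_assoc] using h
  filter_upwards [ae_hasDerivAt_owImpact (β := β) (lam := lam) (y := y) hw,
    Measure.ae_ne volume 0, Measure.ae_ne volume T] with t hderiv ht0 htT ht
  have ht' : t ∈ Ioo 0 T := ⟨lt_of_le_of_ne ht.1 ht0.symm, lt_of_le_of_ne ht.2 htT⟩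
  have hzero : owImpact β lam y w =ᶠ[𝓝 t] 0 :=
    eventually_of_mem (Ioo_mem_nhds ht'.1 ht'.2) fun s hs => hY (Ioo_subset_Icc_self hs)
  have huniq := (hderiv (Icc_subset_uIcc ht)).unique
    ((hasDerivAt_const t 0).congr_of_eventuallyEq hzero)
  rw [hY (Ioo_subset_Icc_self ht')] at huniq
  simpa [hlam] using huniq

theorem integral_owImpact_sq_pos (hlam : lam ≠ 0) (hT : 0 < T)
    (hw : IntervalIntegrable w volume 0 T) (hpos : 0 < volume {t ∈ Icc 0 T | w t ≠ 0}) :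
    0 < ∫ t in (0:ℝ)..T, owImpact β lam y w t ^ 2 := by
  refine lt_of_le_of_ne (intervalIntegral.integral_nonneg hT.le fun t _ => sq_nonneg _)
    fun hzero => hpos.ne' ?_
  have hcont : ContinuousOn (owImpact β lam y w) (Icc 0 T) :=
    uIcc_of_le hT.le ▸ (absolutelyContinuousOnInterval_owImpact hw).continuousOn
  exact volume_setOf_ne_zero_of_owImpact_eqOn_zero hlam hw
    (eqOn_zero_of_integral_sq_eq_zero hT hcont hzero.symm)

end

/-- for square-integrable `q, u` and `β, λ > 0`,
`∫₀ᵀ (Y^q_t - Y^u_t)(q_t - u_t) dt = (1/(2λ)) (Y^q_T - Y^u_T)² + (β/λ) ∫₀ᵀ (Y^q_t - Y^u_t)² dt`,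
and this quantity is strictly positive whenever `q ≠ u` on a set of positive Lebesgue
measure in `[0, T]`. -/
theorem ow_impact_identity
    (β lam y T : ℝ) (hβ : 0 < β) (hlam : 0 < lam) (hT : 0 < T)
    (q u : ℝ → ℝ)
    (hq : MemLp q 2 (volume.restrict (Set.Icc 0 T)))
    (hu : MemLp u 2 (volume.restrict (Set.Icc 0 T))) :
    ((∫ t in (0:ℝ)..T, (owImpact β lam y q t - owImpact β lam y u t) * (q t - u t))
      = (1 / (2 * lam)) * (owImpact β lam y q T - owImpact β lam y u T) ^ 2
        + (β / lam) * ∫ t in (0:ℝ)..T, (owImpact β lam y q t - owImpact β lam y u t) ^ 2)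
    ∧ (0 < volume {t ∈ Set.Icc (0:ℝ) T | q t ≠ u t} →
        0 < ∫ t in (0:ℝ)..T, (owImpact β lam y q t - owImpact β lam y u t) * (q t - u t)) := by
  have hqi := hq.intervalIntegrable_of_Icc one_le_two hT.le
  have hui := hu.intervalIntegrable_of_Icc one_le_two hT.le
  set D := owImpact β lam 0 (q - u)
  have hdiff : EqOn (fun t => owImpact β lam y q t - owImpact β lam y u t) D (uIcc 0 T) :=
    fun t ht => owImpact_sub_owImpact (hqi.mono_set (uIcc_subset_uIcc left_mem_uIcc ht))
      (hui.mono_set (uIcc_subset_uIcc left_mem_uIcc ht))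
  have hDT : owImpact β lam y q T - owImpact β lam y u T = D T := hdiff right_mem_uIcc
  have hw : IntervalIntegrable (q - u) volume 0 T := hqi.sub hui
  have hmixed : (∫ t in (0:ℝ)..T, (owImpact β lam y q t - owImpact β lam y u t) * (q t - u t))
      = ∫ t in (0:ℝ)..T, D t * (q t - u t) :=
    intervalIntegral.integral_congr fun t ht => congrArg (· * (q t - u t)) (hdiff ht)
  have hsquare : (∫ t in (0:ℝ)..T, (owImpact β lam y q t - owImpact β lam y u t) ^ 2)
      = ∫ t in (0:ℝ)..T, D t ^ 2 :=
    intervalIntegral.integral_congr fun t ht => congrArg (· ^ 2) (hdiff ht)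
  rw [hmixed, hsquare, hDT]
  have hidentity : lam * ∫ t in (0:ℝ)..T, D t * (q t - u t)
      = (D T ^ 2 - 0 ^ 2) / 2 + β * ∫ t in (0:ℝ)..T, D t ^ 2 :=
    integral_owImpact_mul hw
  have hsolved : (∫ t in (0:ℝ)..T, D t * (q t - u t))
      = (D T ^ 2 / 2 + β * ∫ t in (0:ℝ)..T, D t ^ 2) / lam := by
    rw [eq_div_iff hlam.ne', mul_comm, hidentity]
    ring
  refine ⟨by rw [hsolved]; ring, fun hpos => ?_⟩
  have hD2 : 0 < ∫ t in (0:ℝ)..T, D t ^ 2 :=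
    integral_owImpact_sq_pos hlam.ne' hT hw (by simpa [sub_eq_zero] using hpos)
  rw [hsolved]
  positivity
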